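/- Let the interpretation for the constraints be the structure of the real numbers, and consider the programs P₀ = { p(X) ← ¬q(X), q(X) ← X ≥ 0, q(X) ← q(X) } and P₂ = { p(X) ← X < 0 ∧ p(X), q(X) ← X ≥ 0, q(X) ← q(X) }. Then for every real number a < 0, the atom p(a) belongs to the perfect model M(P₀) but p(a) does not belong to the perfect model M(P₂). (P₂ is obtained from P₀ by negative unfolding of the first clause followed by folding it using the definition p(X) ← ¬q(X), showing that this combination of steps is not correct.) -/

import Mathlib

namespace CLP

/-! ### The set `W` of countable ordinals -/

/-- `W` : the set of countable ordinals. -/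
abbrev W : Type 1 := {o : Ordinal.{0} // o < (Cardinal.aleph 1).ord}

theorem natW_lt (n : ℕ) : (n : Ordinal.{0}) < (Cardinal.aleph 1).ord := by
  refine Cardinal.lt_ord.mpr ?_
  simpa using (Cardinal.nat_lt_aleph0 n).trans Cardinal.aleph0_lt_aleph_one

/-- natural numbers as countable ordinals -/
def natW (n : ℕ) : W := ⟨n, natW_lt n⟩

/-- the zero ordinal as an element of `W` -/
def zeroW : W := natW 0

theorem succW_lt {o : Ordinal.{0}} (h : o < (Cardinal.aleph 1).ord) :
    o + 1 < (Cardinal.aleph 1).ord := by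
  have hlim : Order.IsSuccLimit ((Cardinal.aleph 1).ord) :=
    Cardinal.isSuccLimit_ord (Cardinal.aleph0_le_aleph 1)
  rw [← Order.succ_eq_add_one]
  exact hlim.succ_lt h

/-- the successor operation on countable ordinals (`σ(A) + 1`) -/
def succW (o : W) : W := ⟨o.1 + 1, succW_lt o.2⟩

/-! ### Syntax and semantics of constraint logic programs

Atoms, constraints, and clauses are represented semantically: an atom with variables
in `V` is a user-defined predicate symbol (from `Pu`) together with the function
mapping each valuation `v : V → D` to the tuple of values of its argument terms, and a
constraint is represented by its satisfaction predicate on valuations (the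
interpretation `𝒟` for the constraints, with carrier `D`, is thereby fixed). -/

/-- An atom: a user-defined predicate symbol together with its (semantically
represented) tuple of argument terms. -/
structure SAtm (V D Pu : Type) where
  pred : Pu
  args : (V → D) → List D

/-- Ground atoms: the base `B_𝒟` is `{p(d₁,…,dₙ) | p ∈ Pred_u, dᵢ ∈ D}`. -/
abbrev GrAtm (Pu D : Type) := Pu × List D

variable {V D Pu : Type}

/-- the ground atom `v(A)` obtained by applying the valuation `v` to the atom `A` -/
def SAtm.eval (A : SAtm V D Pu) (v : V → D) : GrAtm Pu D := (A.pred, A.args v)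

/-- A clause `H ← c ∧ L₁ ∧ … ∧ Lₘ`: a head atom `H`, a constraint `c`, and a body,
i.e. a list of literals; a literal is a pair of a sign (`true` = positive literal `A`,
`false` = negative literal `¬A`) and an atom. -/
structure SClause (V D Pu : Type) where
  head : SAtm V D Pu
  constr : (V → D) → Prop
  body : List (Bool × SAtm V D Pu)

/-- A constraint logic program: a set of clauses (finiteness is stated separately). -/
abbrev SProg (V D Pu : Type) := Set (SClause V D Pu)

/-- truth of a ground literal in a `D`-interpretation `I` -/
def litTrue (I : Set (GrAtm Pu D)) (l : Bool × GrAtm Pu D) : Prop :=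
  if l.1 then l.2 ∈ I else l.2 ∉ I

/-- truth of the ground instance `v(γ)` of the clause `γ` in the `D`-interpretation `I` -/
def SClause.groundTrue (γ : SClause V D Pu) (I : Set (GrAtm Pu D)) (v : V → D) : Prop :=
  γ.constr v → (∀ l ∈ γ.body, litTrue I (l.1, l.2.eval v)) → γ.head.eval v ∈ I

/-- `I` is a `D`-model of the program `P` -/
def isModel (I : Set (GrAtm Pu D)) (P : SProg V D Pu) : Prop :=
  ∀ γ ∈ P, ∀ v, γ.groundTrue I v

/-- the ground instance `v(γ)` of the clause `γ` is locally stratified w.r.t. `σ` -/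
def SClause.locStrat (σ : GrAtm Pu D → W) (γ : SClause V D Pu) (v : V → D) : Prop :=
  γ.constr v → ∀ l ∈ γ.body,
    (l.1 = true → σ (l.2.eval v) ≤ σ (γ.head.eval v)) ∧
    (l.1 = false → σ (l.2.eval v) < σ (γ.head.eval v))

/-- `P` is locally stratified w.r.t. the local stratification `σ : B_𝒟 → W` -/
def locStratWrt (σ : GrAtm Pu D → W) (P : SProg V D Pu) : Prop :=
  ∀ γ ∈ P, ∀ v, γ.locStrat σ v

/-- `P` is locally stratified -/
def LocallyStratified (P : SProg V D Pu) : Prop := ∃ σ, locStratWrt σ P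

/-- `I ≺ J` : `I` is preferable to `J` w.r.t. the local stratification `σ` -/
def pref (σ : GrAtm Pu D → W) (I J : Set (GrAtm Pu D)) : Prop :=
  ∀ A₁ ∈ I \ J, ∃ A₂ ∈ J \ I, σ A₂ < σ A₁

/-- `M` is a perfect model of `P` w.r.t. the local stratification `σ`:
a `D`-model preferable to every other `D`-model of `P` -/
def PerfectModelWrt (σ : GrAtm Pu D → W) (P : SProg V D Pu) (M : Set (GrAtm Pu D)) : Prop :=
  isModel M P ∧ ∀ N, isModel N P → N ≠ M → pref σ M N

/-- `M` is a perfect model of `P` (w.r.t. some local stratification for `P`) -/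
def IsPerfectModel (P : SProg V D Pu) (M : Set (GrAtm Pu D)) : Prop :=
  ∃ σ, locStratWrt σ P ∧ PerfectModelWrt σ P M

/-! ### Predicate dependencies -/

/-- the predicate `p` immediately depends on the predicate `q` in `P` -/
def immDep (P : SProg V D Pu) (p q : Pu) : Prop :=
  ∃ γ ∈ P, γ.head.pred = p ∧ ∃ l ∈ γ.body, (l.2).pred = q

/-- the predicate `p` depends on the predicate `q` in `P` -/
def dependsOn (P : SProg V D Pu) : Pu → Pu → Prop := Relation.TransGen (immDep P)

/-- `Def(p, P)` : the definition of the predicate `p` in `P` -/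
def DefOf (p : Pu) (P : SProg V D Pu) : SProg V D Pu := {γ ∈ P | γ.head.pred = p}

/-! ### Proof trees -/

/-- Finite trees whose internal nodes are ground atoms; the children of a node are
either subtrees (corresponding to positive literals) or leaves labelled by a ground
atom `B` (corresponding to negative literals `¬B`). A node with the empty list of
children is a node whose unique child is the empty conjunction `true`. -/
inductive PT (Pu D : Type) : Type where
  | node (A : GrAtm Pu D) (children : List (PT Pu D ⊕ GrAtm Pu D)) : PT Pu D

/-- the ground atom at the root of a tree -/
def PT.root : PT Pu D → GrAtm Pu D
  | .node A _ => A

/-- the ground literal corresponding to a child of a node of a tree -/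
def childLit : PT Pu D ⊕ GrAtm Pu D → Bool × GrAtm Pu D
  | .inl t => (true, t.root)
  | .inr B => (false, B)

/-- Validity of a tree w.r.t. a program `P` and an "oracle" `O` for the negative
leaves: each node `A` with children `L₁,…,Lᵣ` must be obtained from a ground instance
`A ← c ∧ L₁ ∧ … ∧ Lᵣ` (with `𝒟 ⊨ c`) of a clause of `P`, and every negative leaf
`¬B` must satisfy `O B`. -/
inductive PT.ValidW (P : SProg V D Pu) (O : GrAtm Pu D → Prop) : PT Pu D → Prop where
  | node {A : GrAtm Pu D} {cs : List (PT Pu D ⊕ GrAtm Pu D)}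
      (hc : ∃ γ ∈ P, ∃ v, γ.constr v ∧ γ.head.eval v = A ∧
        γ.body.map (fun l => (l.1, l.2.eval v)) = cs.map childLit)
      (hpos : ∀ t, Sum.inl t ∈ cs → PT.ValidW P O t)
      (hneg : ∀ B, Sum.inr B ∈ cs → O B) :
      PT.ValidW P O (.node A cs)

/-- `HasPTAux σ P α A` holds iff there is a proof tree for `A` and `P`, where a
negative leaf `¬B` is allowed only if there is no proof tree for `B` and `P` among
the proof trees for ground atoms of stratum `< α`. -/
def HasPTAux (σ : GrAtm Pu D → W) (P : SProg V D Pu) (α : W) (A : GrAtm Pu D) : Prop :=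
  ∃ T : PT Pu D, T.root = A ∧
    PT.ValidW P (fun B => ∀ _hlt : σ B < α, ¬ HasPTAux σ P (σ B) B) T
termination_by α.1
decreasing_by exact _hlt

/-- there exists a proof tree for the ground atom `A` and the program `P` -/
def HasProofTree (σ : GrAtm Pu D → W) (P : SProg V D Pu) (A : GrAtm Pu D) : Prop :=
  HasPTAux σ P (σ A) A

/-- `T` is a proof tree for the ground atom `A` and the program `P` -/
def IsProofTree (σ : GrAtm Pu D → W) (P : SProg V D Pu) (A : GrAtm Pu D) (T : PT Pu D) : Prop :=
  T.root = A ∧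
    PT.ValidW P (fun B => ∀ _hlt : σ B < σ A, ¬ HasPTAux σ P (σ B) B) T

/-! ### The measure `μ` -/

mutual
  /-- `size(T)` : the number of atoms occurring at non-leaf nodes of `T` -/
  inductive PT.HasSize : PT Pu D → ℕ → Prop where
    | node {A cs n} : ChildrenSize cs n → PT.HasSize (.node A cs) (1 + n)
  /-- total size of the subtrees among a list of children -/
  inductive ChildrenSize : List (PT Pu D ⊕ GrAtm Pu D) → ℕ → Prop where
    | nil : ChildrenSize [] 0
    | inl {t cs n m} : PT.HasSize t n → ChildrenSize cs m →
        ChildrenSize (Sum.inl t :: cs) (n + m)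
    | inr {B cs m} : ChildrenSize cs m → ChildrenSize (Sum.inr B :: cs) m
end

/-- the (non-strict) lexicographic ordering `≤_lex` on `W × ℕ` -/
def wnLE (a b : W × ℕ) : Prop := a.1 < b.1 ∨ (a.1 = b.1 ∧ a.2 ≤ b.2)

/-- the strict lexicographic ordering `<_lex` on `W × ℕ` -/
def wnLT (a b : W × ℕ) : Prop := a.1 < b.1 ∨ (a.1 = b.1 ∧ a.2 < b.2)

/-- `⟨α₁,m₁⟩ ⊕ ⟨α₂,m₂⟩ = ⟨max(α₁,α₂), m₁+m₂⟩` -/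
noncomputable def oplus (a b : W × ℕ) : W × ℕ := (max a.1 b.1, a.2 + b.2)

/-- `μ(A,P) = min_lex {⟨σ(A), size(T)⟩ | T is a proof tree for A and P}`:
`muAtomIs σ P A m` states that `μ(A,P)` is defined and equal to `m`. -/
def muAtomIs (σ : GrAtm Pu D → W) (P : SProg V D Pu) (A : GrAtm Pu D) (m : W × ℕ) : Prop :=
  (∃ (T : PT Pu D) (sz : ℕ), IsProofTree σ P A T ∧ T.HasSize sz ∧ m = (σ A, sz)) ∧
  (∀ (T : PT Pu D) (sz : ℕ), IsProofTree σ P A T → T.HasSize sz → wnLE m (σ A, sz))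

/-- `μ` on ground literals: `μ(A,P)` for an atom, `⟨σ(A),0⟩` for a negated atom `¬A` -/
def muLitIs (σ : GrAtm Pu D → W) (P : SProg V D Pu) :
    Bool × GrAtm Pu D → W × ℕ → Prop
  | (true, A), m => muAtomIs σ P A m
  | (false, A), m => m = (σ A, 0)

/-- `μ(L₁ ∧ … ∧ Lₙ, P) = μ(L₁,P) ⊕ … ⊕ μ(Lₙ,P)` -/
inductive muGoalIs (σ : GrAtm Pu D → W) (P : SProg V D Pu) :
    List (Bool × GrAtm Pu D) → W × ℕ → Prop where
  | nil : muGoalIs σ P [] (zeroW, 0)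
  | cons {l G m mg} : muLitIs σ P l m → muGoalIs σ P G mg →
      muGoalIs σ P (l :: G) (oplus m mg)

end CLP

namespace Stmt12

open CLP

/-- the user-defined predicate symbols `p` and `q` -/
inductive Pd where
  | p | q
deriving DecidableEq

/-- the atom `p(X)` (one variable, interpreted over the reals) -/
def atomP : SAtm Unit ℝ Pd := ⟨Pd.p, fun v => [v ()]⟩
/-- the atom `q(X)` -/
def atomQ : SAtm Unit ℝ Pd := ⟨Pd.q, fun v => [v ()]⟩

/-- `P₀ = { p(X) ← ¬q(X),  q(X) ← X ≥ 0,  q(X) ← q(X) }` -/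
def P0 : SProg Unit ℝ Pd :=
  { ⟨atomP, fun _ => True, [(false, atomQ)]⟩,
    ⟨atomQ, fun v => v () ≥ 0, []⟩,
    ⟨atomQ, fun _ => True, [(true, atomQ)]⟩ }

/-- `P₂ = { p(X) ← X < 0 ∧ p(X),  q(X) ← X ≥ 0,  q(X) ← q(X) }` -/
def P2 : SProg Unit ℝ Pd :=
  { ⟨atomP, fun v => v () < 0, [(true, atomP)]⟩,
    ⟨atomQ, fun v => v () ≥ 0, []⟩,
    ⟨atomQ, fun _ => True, [(true, atomQ)]⟩ }

/-!
`M(P₀) = {q(b) | b ≥ 0} ∪ {p(b) | b < 0}` and `M(P₂) = {q(b) | b ≥ 0}`. Because local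
stratifications take well-founded values, `≺` is antisymmetric, so a perfect model `M` coincides
with every model `N` such that `N ≺ M`. For any local stratification `σ` of `P₀` and any model `N`,
the candidate for `M(P₀)` is `≺ N`: an atom `p(b)` missing from `N` forces `q(b) ∈ N` with
`b < 0`, and `σ(q(b)) < σ(p(b))`. The candidate for `M(P₂)` is contained in every model of `P₂`.
-/

end Stmt12

namespace CLP

variable {V D Pu : Type} {σ : GrAtm Pu D → W}

theorem pref_of_subset {I J : Set (GrAtm Pu D)} (h : I ⊆ J) : pref σ I J := by
  intro A hA
  exact absurd (h hA.1) hA.2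

theorem eq_of_pref_of_pref {I J : Set (GrAtm Pu D)} (hIJ : pref σ I J) (hJI : pref σ J I) :
    I = J := by
  by_contra hne
  obtain ⟨A, hA, hmin⟩ := (InvImage.wf σ wellFounded_lt).has_min (symmDiff I J)
    (Set.symmDiff_nonempty.2 hne)
  obtain ⟨B, hB, hlt⟩ : ∃ B ∈ symmDiff I J, σ B < σ A := by
    rcases hA with hA | hA
    · obtain ⟨B, hB, hlt⟩ := hIJ A hA
      exact ⟨B, Or.inr hB, hlt⟩
    · obtain ⟨B, hB, hlt⟩ := hJI A hA
      exact ⟨B, Or.inl hB, hlt⟩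
  exact hmin B hB hlt

theorem PerfectModelWrt.eq_of_pref {P : SProg V D Pu} {M N : Set (GrAtm Pu D)}
    (hM : PerfectModelWrt σ P M) (hN : isModel N P) (h : pref σ N M) : N = M := by
  by_contra hne
  exact hne (eq_of_pref_of_pref h (hM.2 N hN hne))

theorem locStratWrt_const {P : SProg V D Pu} (hP : ∀ γ ∈ P, ∀ l ∈ γ.body, l.1 = true) (w : W) :
    locStratWrt (fun _ => w) P := by
  intro γ hγ v _ l hl
  exact ⟨fun _ => le_rfl, fun hneg => absurd (hP γ hγ l hl) (by simp [hneg])⟩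

end CLP

namespace Stmt12

open CLP

def M0 : Set (GrAtm Pd ℝ) :=
  {A | ∃ b : ℝ, (A = (Pd.q, [b]) ∧ 0 ≤ b) ∨ (A = (Pd.p, [b]) ∧ b < 0)}

def M2 : Set (GrAtm Pd ℝ) := {A | ∃ b : ℝ, A = (Pd.q, [b]) ∧ 0 ≤ b}

theorem q_mem_M0_iff {b : ℝ} : ((Pd.q, [b]) : GrAtm Pd ℝ) ∈ M0 ↔ 0 ≤ b := by
  simp [M0, Prod.ext_iff]

theorem p_mem_M0_iff {b : ℝ} : ((Pd.p, [b]) : GrAtm Pd ℝ) ∈ M0 ↔ b < 0 := by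
  simp [M0, Prod.ext_iff]

theorem p_not_mem_M2 {b : ℝ} : ((Pd.p, [b]) : GrAtm Pd ℝ) ∉ M2 := by
  simp [M2, Prod.ext_iff]

theorem q_mem_of_isModel {P : SProg Unit ℝ Pd} (hP : ⟨atomQ, fun v => v () ≥ 0, []⟩ ∈ P)
    {N : Set (GrAtm Pd ℝ)} (hN : isModel N P) {b : ℝ} (hb : 0 ≤ b) :
    ((Pd.q, [b]) : GrAtm Pd ℝ) ∈ N :=
  hN _ hP (fun _ => b) hb (by simp)

theorem p_mem_of_isModel_P0 {N : Set (GrAtm Pd ℝ)} (hN : isModel N P0) {b : ℝ}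
    (hq : ((Pd.q, [b]) : GrAtm Pd ℝ) ∉ N) : ((Pd.p, [b]) : GrAtm Pd ℝ) ∈ N :=
  hN ⟨atomP, fun _ => True, [(false, atomQ)]⟩ (by simp [P0]) (fun _ => b) trivial
    (by simpa [litTrue, SAtm.eval, atomQ] using hq)

theorem q_lt_p_of_locStratWrt_P0 {σ : GrAtm Pd ℝ → W} (hσ : locStratWrt σ P0) (b : ℝ) :
    σ (Pd.q, [b]) < σ (Pd.p, [b]) :=
  (hσ ⟨atomP, fun _ => True, [(false, atomQ)]⟩ (by simp [P0]) (fun _ => b) trivial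
    (false, atomQ) (by simp)).2 rfl

theorem isModel_M0 : isModel M0 P0 := by
  intro γ hγ v hc hbody
  rcases hγ with rfl | rfl | rfl
  · have hq : (Pd.q, [v ()]) ∉ M0 := by simpa [litTrue, SAtm.eval, atomQ] using hbody
    simpa [SAtm.eval, atomP, p_mem_M0_iff, q_mem_M0_iff] using hq
  · exact q_mem_M0_iff.2 hc
  · simpa [litTrue, SAtm.eval, atomQ] using hbody

theorem isModel_M2 : isModel M2 P2 := by
  intro γ hγ v hc hbody
  rcases hγ with rfl | rfl | rfl
  · exact absurd (by simpa [litTrue, SAtm.eval, atomP] using hbody) p_not_mem_M2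
  · exact ⟨v (), rfl, hc⟩
  · simpa [litTrue, SAtm.eval, atomQ] using hbody

theorem pref_M0 {σ : GrAtm Pd ℝ → W} (hσ : locStratWrt σ P0) {N : Set (GrAtm Pd ℝ)}
    (hN : isModel N P0) : pref σ M0 N := by
  rintro A ⟨⟨b, ⟨rfl, hb⟩ | ⟨rfl, hb⟩⟩, hAN⟩
  · exact absurd (q_mem_of_isModel (by simp [P0]) hN hb) hAN
  · have hq : ((Pd.q, [b]) : GrAtm Pd ℝ) ∈ N := by
      by_contra hq
      exact hAN (p_mem_of_isModel_P0 hN hq)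
    exact ⟨_, ⟨hq, fun h => (q_mem_M0_iff.1 h).not_gt hb⟩, q_lt_p_of_locStratWrt_P0 hσ b⟩

theorem M2_subset_of_isModel {N : Set (GrAtm Pd ℝ)} (hN : isModel N P2) : M2 ⊆ N := by
  rintro _ ⟨b, rfl, hb⟩
  exact q_mem_of_isModel (by simp [P2]) hN hb

def sig0 : GrAtm Pd ℝ → W
  | (Pd.p, _) => natW 1
  | (Pd.q, _) => natW 0

theorem locStratWrt_sig0_P0 : locStratWrt sig0 P0 := by
  intro γ hγ v _ l hl
  rcases hγ with rfl | rfl | rfl <;> simp only [List.mem_singleton, List.not_mem_nil] at hl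
  · subst hl
    refine ⟨nofun, fun _ => ?_⟩
    simp [sig0, natW, SAtm.eval, atomP, atomQ]
  · subst hl
    exact ⟨fun _ => le_rfl, nofun⟩

theorem perfectModelWrt_M0 : PerfectModelWrt sig0 P0 M0 :=
  ⟨isModel_M0, fun _ hN _ => pref_M0 locStratWrt_sig0_P0 hN⟩

theorem perfectModelWrt_M2 : PerfectModelWrt (fun _ => zeroW) P2 M2 :=
  ⟨isModel_M2, fun _ hN _ => pref_of_subset (M2_subset_of_isModel hN)⟩

theorem eq_M0_of_isPerfectModel {M : Set (GrAtm Pd ℝ)} (hM : IsPerfectModel P0 M) : M = M0 := by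
  obtain ⟨σ, hσ, hperf⟩ := hM
  exact (hperf.eq_of_pref isModel_M0 (pref_M0 hσ hperf.1)).symm

theorem eq_M2_of_isPerfectModel {M : Set (GrAtm Pd ℝ)} (hM : IsPerfectModel P2 M) : M = M2 := by
  obtain ⟨σ, -, hperf⟩ := hM
  exact (hperf.eq_of_pref isModel_M2 (pref_of_subset (M2_subset_of_isModel hperf.1))).symm

/-- With the constraints interpreted over the real numbers, both
`P₀` and `P₂` have perfect models and, for every real number `a < 0`, the ground
atom `p(a)` belongs to the perfect model `M(P₀)` but does not belong to the perfect
model `M(P₂)`. -/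
theorem p_in_M_P0_not_in_M_P2 :
    (∃ M, IsPerfectModel P0 M) ∧ (∃ M, IsPerfectModel P2 M) ∧
    ∀ a : ℝ, a < 0 →
      (∀ M, IsPerfectModel P0 M → ((Pd.p, [a]) : GrAtm Pd ℝ) ∈ M) ∧
      (∀ M, IsPerfectModel P2 M → ((Pd.p, [a]) : GrAtm Pd ℝ) ∉ M) := by
  have hP2 : locStratWrt (fun _ => zeroW) P2 :=
    locStratWrt_const (by simp [P2]) zeroW
  refine ⟨⟨M0, sig0, locStratWrt_sig0_P0, perfectModelWrt_M0⟩,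
    ⟨M2, _, hP2, perfectModelWrt_M2⟩, fun a ha => ⟨fun M hM => ?_, fun M hM => ?_⟩⟩
  · rw [eq_M0_of_isPerfectModel hM]
    exact p_mem_M0_iff.2 ha
  · rw [eq_M2_of_isPerfectModel hM]
    exact p_not_mem_M2

end Stmt12
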